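/- Let δ be an algebraic integer of degree 2, a, b integers, p a prime with p ∣ b, p ∤ a, t = v_p(b), k a positive integer with ℓ = v_p(k), and (a + bδ)^k = a_k + b_k δ. Assume p odd, or p = 2 with t ≥ 2, or ℓ = 0. If v_p(a^k - 1) ≥ ℓ + t + 1, then v_p(a_k - 1) ≥ ℓ + t + 1, and in particular v_p(a_k - 1) > v_p(b_k). -/

import Mathlib

/-!
Expand `(a + bδ)^k` binomially and reduce `δ^j` to the basis `{1, δ}`. For `j ≥ 2` the term
`C(k,j) b^j` is divisible by `p^(ℓ+t+1)`: from `j C(k,j) = k C(k-1,j-1)` one gets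
`v_p C(k,j) ≥ ℓ - v_p j`, and `(j-1) t ≥ v_p j + 1` as `p^(v_p j) ≤ j` with `p ≥ 3` or `t ≥ 2`;
if `ℓ = 0`, then `j t ≥ t + 1` is enough.
Hence `a_k ≡ a^k` and `b_k ≡ k a^(k-1) b` modulo `p^(ℓ+t+1)`, and the latter has valuation
exactly `ℓ + t`.
-/

open Finset

lemma two_mul_add_one_le_three_pow (s : ℕ) : 2 * s + 1 ≤ 3 ^ s := by
  induction s with
  | zero => simp
  | succ s ih => rw [pow_succ]; omega

lemma succ_le_sub_one_mul_of_pow_le {p s j t : ℕ} (hp : 2 ≤ p) (hj : 2 ≤ j) (hps : p ^ s ≤ j)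
    (ht : 1 ≤ t) (h : 3 ≤ p ∨ 2 ≤ t) : s + 1 ≤ (j - 1) * t := by
  rcases h with hp3 | ht2
  · have : 3 ^ s ≤ j := (Nat.pow_le_pow_left hp3 s).trans hps
    have := two_mul_add_one_le_three_pow s
    have : (j - 1) * 1 ≤ (j - 1) * t := Nat.mul_le_mul_left _ ht
    omega
  · have : s < j := Nat.lt_pow_self hp |>.trans_le hps
    have : (j - 1) * 2 ≤ (j - 1) * t := Nat.mul_le_mul_left _ ht2
    omega

lemma pow_sub_padicValNat_dvd_choose {p n j : ℕ} [Fact p.Prime] (hj : 0 < j) :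
    p ^ (padicValNat p n - padicValNat p j) ∣ n.choose j := by
  rcases lt_or_ge n j with hnj | hjn
  · simp [Nat.choose_eq_zero_of_lt hnj]
  refine (pow_dvd_pow p ?_).trans pow_padicValNat_dvd
  obtain ⟨n, rfl⟩ : ∃ m, n = m + 1 := ⟨n - 1, by omega⟩
  obtain ⟨j, rfl⟩ : ∃ i, j = i + 1 := ⟨j - 1, by omega⟩
  have hval := congrArg (padicValNat p) (Nat.add_one_mul_choose_eq n j)
  rw [padicValNat.mul (by omega) (Nat.choose_pos (by omega)).ne',
    padicValNat.mul (Nat.choose_pos hjn).ne' (by omega)] at hval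
  omega

lemma pow_dvd_choose_mul_pow {p t k j : ℕ} [hp : Fact p.Prime] {b : ℤ} (hbt : (p : ℤ) ^ t ∣ b)
    (ht : 1 ≤ t) (hj : 2 ≤ j) (h : 3 ≤ p ∨ 2 ≤ t ∨ padicValNat p k = 0) :
    (p : ℤ) ^ (padicValNat p k + t + 1) ∣ k.choose j * b ^ j := by
  have hchoose : (p : ℤ) ^ (padicValNat p k - padicValNat p j) ∣ k.choose j := by
    exact_mod_cast pow_sub_padicValNat_dvd_choose (p := p) (n := k) (by omega)
  have hpow : (p : ℤ) ^ (j * t) ∣ b ^ j := by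
    rw [mul_comm, pow_mul]
    exact pow_dvd_pow_of_dvd hbt j
  refine (pow_dvd_pow _ ?_).trans (pow_add (p : ℤ) _ _ ▸ mul_dvd_mul hchoose hpow)
  have hjt : j * t = (j - 1) * t + t := by
    rw [← Nat.succ_mul, Nat.succ_eq_add_one, Nat.sub_add_cancel (by omega)]
  have : 1 * t ≤ (j - 1) * t := Nat.mul_le_mul_right _ (by omega)
  by_cases hk : padicValNat p k = 0
  · omega
  have := succ_le_sub_one_mul_of_pow_le hp.out.two_le hj
    (Nat.le_of_dvd (by omega) pow_padicValNat_dvd) ht (h.imp_right (·.resolve_right hk))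
  omega

lemma add_pow_eq_add_add_sum_Ico {R : Type*} [CommSemiring R] (x y : R) {k : ℕ} (hk : 0 < k) :
    (x + y) ^ k = y ^ k + k * x * y ^ (k - 1) +
      ∑ j ∈ Ico 2 (k + 1), x ^ j * y ^ (k - j) * k.choose j := by
  rw [add_pow, ← sum_range_add_sum_Ico _ (show 2 ≤ k + 1 by omega)]
  simp only [sum_range_succ, range_one, sum_singleton, pow_zero, tsub_zero, one_mul,
    Nat.choose_zero_right, Nat.cast_one, mul_one, pow_one, Nat.choose_one_right]
  ring

section QuadraticCoordinates

variable {R : Type*} [CommRing R] {δ : R} {u v : ℤ}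

lemma exists_pow_eq_intCast_add_intCast_mul (h2 : δ ^ 2 = u + v * δ) (j : ℕ) :
    ∃ c d : ℤ, δ ^ j = c + d * δ := by
  induction j with
  | zero => exact ⟨1, 0, by simp⟩
  | succ j ih =>
    obtain ⟨c, d, hj⟩ := ih
    refine ⟨d * u, c + d * v, ?_⟩
    calc δ ^ (j + 1) = c * δ + d * δ ^ 2 := by rw [pow_succ, hj]; ring
      _ = _ := by rw [h2]; push_cast; ring

lemma exists_sum_eq_mul_intCast_add_intCast_mul (h2 : δ ^ 2 = u + v * δ) {q : ℤ} (s : Finset ℕ)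
    (e : ℕ → ℤ) (he : ∀ j ∈ s, q ∣ e j) :
    ∃ m n : ℤ, ∑ j ∈ s, (e j : R) * δ ^ j = q * (m + n * δ) := by
  classical
  induction s using Finset.induction with
  | empty => exact ⟨0, 0, by simp⟩
  | insert i s hi ih =>
    obtain ⟨m, n, hs⟩ := ih fun j hj => he j (mem_insert_of_mem hj)
    obtain ⟨c, d, hδ⟩ := exists_pow_eq_intCast_add_intCast_mul h2 i
    obtain ⟨r, hr⟩ := he i (mem_insert_self i s)
    refine ⟨m + r * c, n + r * d, ?_⟩
    rw [sum_insert hi, hs, hδ, hr]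
    push_cast
    ring

lemma exists_add_mul_pow_eq (h2 : δ ^ 2 = u + v * δ) (a b q : ℤ) {k : ℕ} (hk : 0 < k)
    (hq : ∀ j ∈ Ico 2 (k + 1), q ∣ k.choose j * b ^ j) :
    ∃ m n : ℤ, ((a : R) + b * δ) ^ k =
      ((a ^ k + q * m : ℤ) : R) + ((k * a ^ (k - 1) * b + q * n : ℤ) : R) * δ := by
  obtain ⟨m, n, htail⟩ := exists_sum_eq_mul_intCast_add_intCast_mul (R := R) h2 (Ico 2 (k + 1))
    (fun j => k.choose j * b ^ j * a ^ (k - j)) fun j hj => (hq j hj).mul_right _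
  refine ⟨m, n, ?_⟩
  rw [add_comm, add_pow_eq_add_add_sum_Ico _ _ hk]
  have : ∑ j ∈ Ico 2 (k + 1), ((b : R) * δ) ^ j * (a : R) ^ (k - j) * k.choose j =
      ∑ j ∈ Ico 2 (k + 1), ((k.choose j * b ^ j * a ^ (k - j) : ℤ) : R) * δ ^ j :=
    sum_congr rfl fun j _ => by push_cast; ring
  rw [this, htail]
  push_cast
  ring

end QuadraticCoordinates

lemma emultiplicity_add_pow_succ_mul {α : Type*} [Ring α]
    {p x : α} {N : ℕ} (hx : emultiplicity p x = N) (y : α) :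
    emultiplicity p (x + p ^ (N + 1) * y) = N := by
  have hgt : (N : ℕ∞) < emultiplicity p (p ^ (N + 1) * y) :=
    (Nat.cast_lt.mpr N.lt_succ_self).trans_le (le_emultiplicity_of_pow_dvd (dvd_mul_right _ _))
  rw [add_comm, emultiplicity_add_of_gt (hx ▸ hgt), hx]

theorem stmt_16 {R : Type*} [CommRing R] (δ : R) (u v : ℤ)
    (h2 : δ ^ 2 = (u : R) + (v : R) * δ)
    (hindep : ∀ m n m_ n_ : ℤ, (m : R) + (n : R) * δ = (m_ : R) + (n_ : R) * δ → m = m_ ∧ n = n_)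
    (a b : ℤ) (p : ℕ) (hp : p.Prime) (hpb : (p : ℤ) ∣ b) (hpa : ¬ (p : ℤ) ∣ a) (hb : b ≠ 0)
    (t : ℕ) (ht : t = padicValInt p b)
    (k : ℕ) (hk : 0 < k) (ℓ : ℕ) (hℓ : ℓ = padicValNat p k)
    (a_k b_k : ℤ) (hpow : ((a : R) + (b : R) * δ) ^ k = (a_k : R) + (b_k : R) * δ)
    (hcase : Odd p ∨ (p = 2 ∧ 2 ≤ t) ∨ ℓ = 0)
    (hdvd : (p : ℤ) ^ (ℓ + t + 1) ∣ a ^ k - 1) :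
    (p : ℤ) ^ (ℓ + t + 1) ∣ a_k - 1 ∧
      emultiplicity ((p : ℤ)) (a_k - 1) > emultiplicity ((p : ℤ)) b_k := by
  have : Fact p.Prime := ⟨hp⟩
  have hpZ : Prime (p : ℤ) := Nat.prime_iff_prime_int.mp hp
  have hbt : emultiplicity (p : ℤ) b = t := by
    rw [← Int.emultiplicity_natAbs, ← padicValNat_eq_emultiplicity (Int.natAbs_ne_zero.mpr hb), ht]
    rfl
  have ht1 : 1 ≤ t := by exact_mod_cast hbt ▸ le_emultiplicity_of_pow_dvd (pow_one (p : ℤ) ▸ hpb)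
  have hcase' : 3 ≤ p ∨ 2 ≤ t ∨ padicValNat p k = 0 := by
    have := hp.two_le
    rcases hcase with ⟨m, rfl⟩ | ⟨_, h⟩ | h
    exacts [.inl (by omega), .inr (.inl h), .inr (.inr (hℓ ▸ h))]
  obtain ⟨m, n, hexp⟩ := exists_add_mul_pow_eq (R := R) h2 a b _ hk fun j hj =>
    hℓ ▸ pow_dvd_choose_mul_pow (ht ▸ padicValInt_dvd b) ht1 (mem_Ico.mp hj).1 hcase'
  obtain ⟨rfl, rfl⟩ := hindep _ _ _ _ (hpow.symm.trans hexp)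
  have hak : (p : ℤ) ^ (ℓ + t + 1) ∣ a ^ k + (p : ℤ) ^ (ℓ + t + 1) * m - 1 := by
    simpa [add_sub_right_comm] using dvd_add hdvd (dvd_mul_right _ m)
  have hlead : emultiplicity (p : ℤ) (k * a ^ (k - 1) * b) = (ℓ + t : ℕ) := by
    rw [emultiplicity_mul hpZ, emultiplicity_mul hpZ, emultiplicity_pow hpZ,
      emultiplicity_eq_zero.mpr hpa, Int.natCast_emultiplicity,
      ← padicValNat_eq_emultiplicity hk.ne', hbt, hℓ]
    simp
  refine ⟨hak, ?_⟩
  rw [emultiplicity_add_pow_succ_mul hlead]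
  exact (Nat.cast_lt.mpr (ℓ + t).lt_succ_self).trans_le (le_emultiplicity_of_pow_dvd hak)
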